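/- arXiv:2102.09070 — 3 statements merged into one kernel-verified Lean document; each statement's English description precedes it below -/
import Mathlib

section
/- Let p be a prime, n ≥ 1, x ∈ ℤ_p^n, and τ = (τ₁,…,τₙ) ∈ ℝ^n with Σ_{i=1}^n τ_i < n+1 and τ_i > 1 for each 1 ≤ i ≤ n. Then there exists N₀ ∈ ℕ such that for all N ≥ N₀, #𝒬(x, τ, N) ≥ (1/pⁿ)·N^{n+1 − Σ_{i=1}^n τ_i} − 1, where 𝒬(x, τ, N) is the set of integer vectors (q₀,…,qₙ) with 0 < q₀ ≤ N, max_i |q_i| ≤ N, and |q₀x_i − q_i|_p < N^{−τ_i} for all i. -/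
open scoped BigOperators

/-- The set `𝒬(x, τ, N)` of integer vectors `(q₀, q₁, …, qₙ)` with `0 < q₀ ≤ N`,
`max |q_i| ≤ N` and `|q₀ x_i − q_i|_p < N^{−τ_i}` for all `i`. -/
def QsetT {p : ℕ} [Fact p.Prime] {n : ℕ} (x : Fin n → ℤ_[p]) (τ : Fin n → ℝ)
    (N : ℕ) : Set (ℤ × (Fin n → ℤ)) :=
  {q | 0 < q.1 ∧ q.1 ≤ (N : ℤ) ∧ (∀ i, |q.2 i| ≤ (N : ℤ)) ∧
    ∀ i, ‖(q.1 : ℤ_[p]) * x i - (q.2 i : ℤ_[p])‖ < (N : ℝ) ^ (-(τ i))}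

/-- Lemma 2: lower bound on `#𝒬(x, τ, N)`. -/
theorem counting_lower_bound {p : ℕ} [Fact p.Prime] {n : ℕ} (hn : 1 ≤ n)
    (x : Fin n → ℤ_[p]) (τ : Fin n → ℝ)
    (hsum : ∑ i, τ i < (n : ℝ) + 1) (hτ : ∀ i, 1 < τ i) :
    ∃ N₀ : ℕ, ∀ N : ℕ, N₀ ≤ N →
      (1 / (p : ℝ) ^ n) * (N : ℝ) ^ ((n : ℝ) + 1 - ∑ i, τ i) - 1 ≤
        ((QsetT x τ N).ncard : ℝ) := by
  have hp : p.Prime := Fact.out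
  haveI : NeZero p := ⟨hp.ne_zero⟩
  have hp1 : (1 : ℝ) < p := by exact_mod_cast hp.one_lt
  have hp0 : (0 : ℝ) < p := lt_trans one_pos hp1
  refine ⟨1, fun N hN => ?_⟩
  have hN0 : 0 < N := hN
  have hNpos : (0 : ℝ) < N := by exact_mod_cast hN0
  have hN1 : (1 : ℝ) ≤ N := by exact_mod_cast hN
  -- exponents
  set k : Fin n → ℕ := fun i => (⌊τ i * Real.logb p N⌋).toNat + 1 with hkdef
  have hlogb0 : 0 ≤ Real.logb p N := Real.logb_nonneg hp1 hN1
  have ha0 : ∀ i, 0 ≤ τ i * Real.logb p N := fun i =>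
    mul_nonneg (le_of_lt (lt_trans one_pos (hτ i))) hlogb0
  have hfl : ∀ i, ((((⌊τ i * Real.logb p N⌋).toNat : ℕ)) : ℝ) = (⌊τ i * Real.logb p N⌋ : ℝ) := by
    intro i
    have := Int.toNat_of_nonneg (Int.floor_nonneg.mpr (ha0 i))
    exact_mod_cast congrArg (Int.cast : ℤ → ℝ) this
  have hNrpow : ∀ i, (N : ℝ) ^ (τ i) = (p : ℝ) ^ (τ i * Real.logb p N) := by
    intro i
    have h : Real.logb p ((N:ℝ) ^ (τ i)) = τ i * Real.logb p N := by
      rw [Real.logb, Real.log_rpow hNpos, Real.logb]; ring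
    rw [← h, Real.rpow_logb hp0 (ne_of_gt hp1) (Real.rpow_pos_of_pos hNpos _)]
  have hkreal : ∀ i, ((k i : ℕ) : ℝ) = (⌊τ i * Real.logb p N⌋ : ℝ) + 1 := by
    intro i
    simp only [hkdef]
    push_cast
    rw [hfl i]
  have hklt : ∀ i, (N : ℝ) ^ (τ i) < (p : ℝ) ^ (k i) := by
    intro i
    rw [hNrpow i, ← Real.rpow_natCast (p:ℝ) (k i)]
    apply (Real.rpow_lt_rpow_left_iff hp1).mpr
    rw [hkreal i]
    exact Int.lt_floor_add_one _
  have hkle : ∀ i, ((p : ℝ)) ^ (k i) ≤ p * (N : ℝ) ^ (τ i) := by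
    intro i
    rw [hNrpow i]
    have h1 : (p : ℝ) ^ ((k i : ℝ)) = (p : ℝ) ^ (k i) := Real.rpow_natCast _ _
    rw [← h1]
    have h2 : (p : ℝ) * (p:ℝ) ^ (τ i * Real.logb p N) = (p:ℝ) ^ (τ i * Real.logb p N + 1) := by
      rw [Real.rpow_add hp0, Real.rpow_one]; ring
    rw [h2]
    apply Real.rpow_le_rpow_of_exponent_le hp1.le
    have : ((k i : ℕ) : ℝ) = (⌊τ i * Real.logb p N⌋ : ℝ) + 1 := by
      simp [hkdef, hfl i]
    rw [this]
    have := Int.floor_le (τ i * Real.logb p N)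
    linarith
  -- integer bound
  have hNltpk : ∀ i, (N : ℤ) < (p : ℤ) ^ (k i) := by
    intro i
    have h1 : (N : ℝ) ≤ (N : ℝ) ^ (τ i) := by
      calc (N:ℝ) = (N:ℝ) ^ (1:ℝ) := (Real.rpow_one _).symm
      _ ≤ _ := Real.rpow_le_rpow_of_exponent_le hN1 (hτ i).le
    have h2 := lt_of_le_of_lt h1 (hklt i)
    exact_mod_cast h2
  set F : (ℤ × (Fin n → ℤ)) → (∀ i, ZMod (p ^ k i)) :=
    fun q i => PadicInt.toZModPow (k i) ((q.1 : ℤ_[p]) * x i - ((q.2 i : ℤ) : ℤ_[p])) with hF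
  set D : Finset (ℤ × (Fin n → ℤ)) :=
    (Finset.Icc (0:ℤ) (N:ℤ)) ×ˢ Fintype.piFinset (fun _ => Finset.Icc (0:ℤ) (N:ℤ)) with hD
  have hDcard : D.card = (N+1)^(n+1) := by
    rw [hD, Finset.card_product, Fintype.card_piFinset]
    simp only [Int.card_Icc]
    have : ((N:ℤ) + 1 - 0).toNat = N + 1 := by omega
    rw [this, Finset.prod_const, Finset.card_univ, Fintype.card_fin]
    ring
  -- key congruence
  have key : ∀ q q' : ℤ × (Fin n → ℤ), F q = F q' → ∀ i,
      ‖((q.1 - q'.1 : ℤ) : ℤ_[p]) * x i - ((q.2 i - q'.2 i : ℤ) : ℤ_[p])‖ ≤ (p:ℝ) ^ (-(k i : ℤ)) := by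
    intro q q' h i
    have h1 : PadicInt.toZModPow (k i)
        (((q.1:ℤ_[p]) * x i - ((q.2 i : ℤ) : ℤ_[p])) - ((q'.1:ℤ_[p]) * x i - ((q'.2 i : ℤ) : ℤ_[p]))) = 0 := by
      rw [map_sub]
      have h2 := congrFun h i
      simp only [hF] at h2
      rw [h2, sub_self]
    have h2 : (((q.1:ℤ_[p]) * x i - ((q.2 i : ℤ) : ℤ_[p])) - ((q'.1:ℤ_[p]) * x i - ((q'.2 i : ℤ) : ℤ_[p])))
        ∈ RingHom.ker (PadicInt.toZModPow (k i)) := h1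
    rw [PadicInt.ker_toZModPow] at h2
    have h3 := (PadicInt.norm_le_pow_iff_mem_span_pow _ (k i)).mpr h2
    have heq : ((q.1 - q'.1 : ℤ) : ℤ_[p]) * x i - ((q.2 i - q'.2 i : ℤ) : ℤ_[p])
        = (((q.1:ℤ_[p]) * x i - ((q.2 i : ℤ) : ℤ_[p])) - ((q'.1:ℤ_[p]) * x i - ((q'.2 i : ℤ) : ℤ_[p]))) := by
      push_cast
      ring
    rw [heq]
    exact h3
  -- pigeonhole
  set K : ℕ := Fintype.card (∀ i, ZMod (p ^ k i)) with hK
  have hKpos : 0 < K := Fintype.card_pos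
  have hKR : (0:ℝ) < K := by exact_mod_cast hKpos
  have fibersum : D.card = ∑ y : (∀ i, ZMod (p ^ k i)), (D.filter (fun q => F q = y)).card :=
    Finset.card_eq_sum_card_fiberwise (fun a _ => Finset.mem_univ (F a))
  obtain ⟨y, -, hy⟩ : ∃ y ∈ Finset.univ,
      ((D.card : ℝ)/K) ≤ ((D.filter (fun q => F q = y)).card : ℝ) := by
    apply Finset.exists_le_of_sum_le Finset.univ_nonempty
    rw [Finset.sum_const, Finset.card_univ, ← hK, nsmul_eq_mul,
      mul_div_cancel₀ _ (ne_of_gt hKR)]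
    exact_mod_cast le_of_eq fibersum
  set B : Finset (ℤ × (Fin n → ℤ)) := D.filter (fun q => F q = y) with hB
  have hDpos : 0 < D.card := by rw [hDcard]; positivity
  have hBne : B.Nonempty := by
    rw [← Finset.card_pos]
    have hpos : (0:ℝ) < (B.card : ℝ) :=
      lt_of_lt_of_le (div_pos (by exact_mod_cast hDpos) hKR) hy
    exact_mod_cast hpos
  obtain ⟨a, haB, hamin⟩ := Finset.exists_min_image B (fun q => q.1) hBne
  -- bounds from membership in D
  have hDbound : ∀ q ∈ B, (0 ≤ q.1 ∧ q.1 ≤ (N:ℤ)) ∧ ∀ i, 0 ≤ q.2 i ∧ q.2 i ≤ (N:ℤ) := by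
    intro q hq
    have hqD : q ∈ D := Finset.mem_of_mem_filter q hq
    rw [hD, Finset.mem_product, Finset.mem_Icc] at hqD
    refine ⟨hqD.1, fun i => ?_⟩
    have := hqD.2
    rw [Fintype.mem_piFinset] at this
    have := this i
    rw [Finset.mem_Icc] at this
    exact this
  have hFB : ∀ q ∈ B, F q = y := by
    intro q hq
    exact (Finset.mem_filter.mp hq).2
  -- the translation map
  set g : (ℤ × (Fin n → ℤ)) → (ℤ × (Fin n → ℤ)) :=
    fun q => (q.1 - a.1, fun i => q.2 i - a.2 i) with hg
  have hmem : ∀ q ∈ B.erase a, g q ∈ QsetT x τ N := by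
    intro q hq
    obtain ⟨hqa, hqB⟩ := Finset.mem_erase.mp hq
    have hnorm := key q a (by rw [hFB q hqB, hFB a haB])
    have hqbd := hDbound q hqB
    have habd := hDbound a haB
    have hq1 : a.1 ≤ q.1 := hamin q hqB
    have hne : q.1 ≠ a.1 := by
      intro hq1a
      apply hqa
      have h2 : q.2 = a.2 := by
        funext i
        have h3 := hnorm i
        rw [hq1a, sub_self] at h3
        simp only [Int.cast_zero, zero_mul, zero_sub, norm_neg] at h3
        have h4 : ((p:ℤ) ^ (k i)) ∣ (q.2 i - a.2 i) := by
          exact (PadicInt.norm_int_le_pow_iff_dvd).mp h3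
        have h5 : |q.2 i - a.2 i| < (p:ℤ) ^ (k i) := by
          have b1 := (hqbd.2 i).1
          have b2 := (hqbd.2 i).2
          have b3 := (habd.2 i).1
          have b4 := (habd.2 i).2
          have := hNltpk i
          rw [abs_lt]
          constructor <;> linarith
        have := Int.eq_zero_of_abs_lt_dvd h4 h5
        linarith
      exact Prod.ext hq1a h2
    refine ⟨?_, ?_, ?_, ?_⟩
    · simp only [hg]
      omega
    · simp only [hg]
      have := hqbd.1.2
      have := habd.1.1
      omega
    · intro i
      simp only [hg]
      have b1 := (hqbd.2 i).1
      have b2 := (hqbd.2 i).2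
      have b3 := (habd.2 i).1
      have b4 := (habd.2 i).2
      rw [abs_le]
      constructor <;> linarith
    · intro i
      have h3 := hnorm i
      simp only [hg]
      refine lt_of_le_of_lt ?_ (lt_of_le_of_lt h3 ?_)
      · exact le_rfl
      · -- p ^ (-(k i):ℤ) < N ^ (-τ i)
        have hz : ((p:ℝ)) ^ (-(k i : ℤ)) = ((p:ℝ) ^ (k i))⁻¹ := by
          rw [zpow_neg, zpow_natCast]
        rw [hz, Real.rpow_neg hNpos.le]
        apply inv_strictAnti₀ (Real.rpow_pos_of_pos hNpos _) (hklt i)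
  -- injectivity
  have hinj : Set.InjOn g (B.erase a) := by
    intro u hu v hv huv
    simp only [hg, Prod.mk.injEq] at huv
    obtain ⟨h1, h2⟩ := huv
    have e1 : u.1 = v.1 := by omega
    have e2 : u.2 = v.2 := by
      funext i
      have := congrFun h2 i
      omega
    exact Prod.ext e1 e2
  set S : Finset (ℤ × (Fin n → ℤ)) := (B.erase a).image g with hS
  have hScard : S.card = B.card - 1 := by
    rw [hS, Finset.card_image_of_injOn hinj, Finset.card_erase_of_mem haB]
  have hfin : (QsetT x τ N).Finite := by
    apply Set.Finite.subset (Finset.finite_toSet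
      ((Finset.Icc (1:ℤ) (N:ℤ)) ×ˢ Fintype.piFinset (fun _ => Finset.Icc (-(N:ℤ)) (N:ℤ))))
    rintro ⟨q0, qv⟩ ⟨h1, h2, h3, -⟩
    simp only [Finset.mem_coe, Finset.mem_product, Finset.mem_Icc, Fintype.mem_piFinset]
    exact ⟨⟨h1, h2⟩, fun i => abs_le.mp (h3 i)⟩
  have hsubQ : ↑S ⊆ QsetT x τ N := by
    intro z hz
    rw [hS, Finset.coe_image] at hz
    obtain ⟨q, hq, rfl⟩ := hz
    exact hmem q hq
  have hcount : (B.card - 1 : ℕ) ≤ (QsetT x τ N).ncard := by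
    rw [← hScard, ← Set.ncard_coe_finset S]
    exact Set.ncard_le_ncard hsubQ hfin
  -- final arithmetic
  have hKprod : (K : ℝ) = ∏ i, ((p:ℝ) ^ (k i)) := by
    rw [hK, Fintype.card_pi]
    push_cast
    congr 1
    funext i
    rw [ZMod.card]
    push_cast
    ring
  have hKle : (K : ℝ) ≤ (p:ℝ)^n * (N:ℝ) ^ (∑ i, τ i) := by
    rw [hKprod]
    calc ∏ i, ((p:ℝ) ^ (k i)) ≤ ∏ i, ((p:ℝ) * (N:ℝ) ^ (τ i)) := by
          apply Finset.prod_le_prod (fun i _ => by positivity) (fun i _ => hkle i)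
      _ = (p:ℝ)^n * (N:ℝ) ^ (∑ i, τ i) := by
          rw [Finset.prod_mul_distrib, Finset.prod_const, Finset.card_univ, Fintype.card_fin,
            Real.rpow_sum_of_pos hNpos]
  have hmain : (1 / (p:ℝ)^n) * (N:ℝ) ^ ((n:ℝ) + 1 - ∑ i, τ i) ≤ (B.card : ℝ) := by
    have h1 : (N:ℝ) ^ ((n:ℝ) + 1 - ∑ i, τ i) = (N:ℝ)^(n+1) / (N:ℝ) ^ (∑ i, τ i) := by
      rw [Real.rpow_sub hNpos]
      congr 1
      rw [← Real.rpow_natCast (N:ℝ) (n+1)]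
      push_cast
      ring_nf
    rw [h1]
    rw [one_div, inv_mul_eq_div, div_div]
    calc (N:ℝ)^(n+1) / ((N:ℝ) ^ (∑ i, τ i) * (p:ℝ)^n)
        ≤ ((D.card : ℝ)) / (K:ℝ) := by
          have hnum : (N:ℝ)^(n+1) ≤ ((D.card : ℝ)) := by
            rw [hDcard]
            push_cast
            apply pow_le_pow_left₀ (by positivity) (by linarith)
          have hden : (K:ℝ) ≤ (N:ℝ) ^ (∑ i, τ i) * (p:ℝ)^n := by
            rw [mul_comm]; exact hKle
          exact div_le_div₀ (Nat.cast_nonneg _) hnum hKR hden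
      _ ≤ (B.card : ℝ) := hy
  have hB1 : 1 ≤ B.card := Finset.card_pos.mpr hBne
  have hc : ((B.card - 1 : ℕ) : ℝ) ≤ ((QsetT x τ N).ncard : ℝ) := by exact_mod_cast hcount
  have hc2 : ((B.card : ℝ) - 1) ≤ ((QsetT x τ N).ncard : ℝ) := by
    have : ((B.card - 1 : ℕ) : ℝ) = (B.card : ℝ) - 1 := by
      push_cast [hB1]
      ring
    linarith [hc, this]
  linarith
end

section
/- Let p be a prime and let L_i : ℤ_p^{n+1} → ℤ_p, i = 1,…,n, be linear forms with p-adic integer coefficients. Let τ₁,…,τₙ ∈ ℝ₊ satisfy Σ_{i=1}^n τ_i = n+1, and let H ≥ 1. Then there exists a non-zero integer vector x = (x₀, x₁,…,xₙ) ∈ ℤ^{n+1} with max_{0≤i≤n} |x_i| ≤ H satisfying |L_i(x)|_p < p·H^{−τ_i} for all i = 1,…,n. -/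
open scoped BigOperators

/-- The `p`-adic version of Minkowski's theorem for systems of linear forms:
given linear forms `L_i(x) = Σ_j a i j * x_j` with `p`-adic integer coefficients,
positive exponents `τ_i` with `Σ τ_i = n + 1` and `H ≥ 1`, there is a nonzero
integer vector `x` with `max |x_i| ≤ H` and `|L_i(x)|_p < p · H^{−τ_i}` for all `i`. -/
theorem padic_minkowski_linear_forms {p : ℕ} [Fact p.Prime] {n : ℕ}
    (a : Fin n → Fin (n + 1) → ℤ_[p]) (τ : Fin n → ℝ) (hτ : ∀ i, 0 < τ i)
    (hsum : ∑ i, τ i = (n : ℝ) + 1) (H : ℝ) (hH : 1 ≤ H) :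
    ∃ x : Fin (n + 1) → ℤ, x ≠ 0 ∧ (∀ i, (|x i| : ℝ) ≤ H) ∧
      ∀ i, ‖∑ j, a i j * (x j : ℤ_[p])‖ < (p : ℝ) * H ^ (-(τ i)) := by
  have hp : 1 < (p : ℝ) := by exact_mod_cast (Fact.out : p.Prime).one_lt
  have hp0 : (0 : ℝ) < p := lt_trans one_pos hp
  have hH0 : (0 : ℝ) < H := lt_of_lt_of_le one_pos hH
  have hHτ : ∀ i, (0 : ℝ) < H ^ τ i := fun i => Real.rpow_pos_of_pos hH0 _
  -- choose minimal exponents m i with H ^ τ i < p ^ (m i + 1)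
  have hex : ∀ i : Fin n, ∃ k : ℕ, H ^ τ i < (p : ℝ) ^ (k + 1) := by
    intro i
    obtain ⟨k, hk⟩ := pow_unbounded_of_one_lt (H ^ τ i) hp
    exact ⟨k, lt_of_lt_of_le hk (pow_le_pow_right₀ (le_of_lt hp) (Nat.le_succ k))⟩
  set m : Fin n → ℕ := fun i => Nat.find (hex i) with hmdef
  have hm1 : ∀ i, H ^ τ i < (p : ℝ) ^ (m i + 1) := fun i => Nat.find_spec (hex i)
  have hm2 : ∀ i, ((p : ℝ)) ^ (m i) ≤ H ^ τ i := by
    intro i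
    rcases Nat.eq_zero_or_pos (m i) with h0 | h0
    · rw [h0, pow_zero]
      calc (1 : ℝ) = H ^ (0 : ℝ) := (Real.rpow_zero H).symm
        _ ≤ H ^ τ i := Real.rpow_le_rpow_of_exponent_le hH (le_of_lt (hτ i))
    · have hlt : m i - 1 < m i := Nat.sub_lt h0 one_pos
      have := Nat.find_min (hex i) hlt
      push_neg at this
      calc ((p : ℝ)) ^ m i = (p : ℝ) ^ (m i - 1 + 1) := by rw [Nat.sub_add_cancel h0]
        _ ≤ H ^ τ i := this
  set N : ℕ := ⌊H⌋₊ with hNdef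
  have hHN : H < (N : ℝ) + 1 := Nat.lt_floor_add_one H
  have hNH : (N : ℝ) ≤ H := Nat.floor_le (le_of_lt hH0)
  haveI : ∀ i, NeZero (p ^ m i) := fun i => ⟨pow_ne_zero _ (Fact.out : p.Prime).ne_zero⟩
  -- pigeonhole
  have hcard : Fintype.card (∀ i : Fin n, ZMod (p ^ m i)) <
      Fintype.card (Fin (n + 1) → Fin (N + 1)) := by
    rw [Fintype.card_pi, Fintype.card_pi]
    simp only [ZMod.card, Fintype.card_fin, Finset.prod_const, Finset.card_univ,
      Fintype.card_fin]
    have h1 : ((∏ i, p ^ m i : ℕ) : ℝ) ≤ H ^ ((n : ℝ) + 1) := by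
      push_cast
      calc ∏ i, ((p : ℝ)) ^ m i ≤ ∏ i, H ^ τ i :=
            Finset.prod_le_prod (fun i _ => by positivity) (fun i _ => hm2 i)
        _ = H ^ (∑ i, τ i) := (Real.rpow_sum_of_pos hH0 τ Finset.univ).symm
        _ = H ^ ((n : ℝ) + 1) := by rw [hsum]
    have h2 : H ^ ((n : ℝ) + 1) < (((N : ℝ) + 1)) ^ (n + 1) := by
      have : H ^ ((n : ℝ) + 1) = H ^ (n + 1) := by
        rw [show ((n : ℝ) + 1) = ((n + 1 : ℕ) : ℝ) by push_cast; ring, Real.rpow_natCast]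
      rw [this]
      exact pow_lt_pow_left₀ hHN (le_of_lt hH0) (Nat.succ_ne_zero n)
    have := lt_of_le_of_lt h1 h2
    exact_mod_cast this
  obtain ⟨x', x'', hne, hfe⟩ := Fintype.exists_ne_map_eq_of_card_lt
    (fun (x : Fin (n + 1) → Fin (N + 1)) (i : Fin n) =>
      PadicInt.toZModPow (m i) (∑ j, a i j * ((x j : ℕ) : ℤ_[p]))) hcard
  refine ⟨fun j => (x' j : ℤ) - (x'' j : ℤ), ?_, ?_, ?_⟩
  · intro h
    apply hne
    funext j
    have := congrFun h j
    simp only [Pi.zero_apply, sub_eq_zero] at this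
    have : (x' j : ℕ) = (x'' j : ℕ) := by exact_mod_cast this
    exact Fin.ext this
  · intro j
    simp only []
    have h1 : ((x' j : ℕ) : ℤ) ≤ N := by exact_mod_cast Nat.lt_succ_iff.mp (x' j).is_lt
    have h2 : ((x'' j : ℕ) : ℤ) ≤ N := by exact_mod_cast Nat.lt_succ_iff.mp (x'' j).is_lt
    have habs : |((x' j : ℕ) : ℤ) - ((x'' j : ℕ) : ℤ)| ≤ (N : ℤ) := by
      rw [abs_le]; omega
    have hre : ((|((x' j : ℕ) : ℤ) - ((x'' j : ℕ) : ℤ)| : ℤ) : ℝ) ≤ H :=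
      le_trans (by exact_mod_cast habs) hNH
    exact_mod_cast hre
  · intro i
    have hker : (PadicInt.toZModPow (m i))
        (∑ j, a i j * (((((x' j : ℕ) : ℤ) - ((x'' j : ℕ) : ℤ)) : ℤ) : ℤ_[p])) = 0 := by
      have hc := congrFun hfe i
      have : (∑ j, a i j * (((((x' j : ℕ) : ℤ) - ((x'' j : ℕ) : ℤ)) : ℤ) : ℤ_[p]))
          = (∑ j, a i j * ((x' j : ℕ) : ℤ_[p])) - (∑ j, a i j * ((x'' j : ℕ) : ℤ_[p])) := by
        rw [← Finset.sum_sub_distrib]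
        congr 1; funext j; push_cast; ring
      rw [this, map_sub, hc, sub_self]
    have hnorm : ‖∑ j, a i j * (((((x' j : ℕ) : ℤ) - ((x'' j : ℕ) : ℤ)) : ℤ) : ℤ_[p])‖
        ≤ (p : ℝ) ^ (-(m i : ℤ)) := by
      rw [PadicInt.norm_le_pow_iff_mem_span_pow, ← PadicInt.ker_toZModPow, RingHom.mem_ker]
      exact hker
    refine lt_of_le_of_lt hnorm ?_
    have hpm : (0 : ℝ) < (p : ℝ) ^ (m i) := by positivity
    rw [zpow_neg, zpow_natCast, Real.rpow_neg (le_of_lt hH0)]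
    rw [inv_eq_one_div, show (p : ℝ) * (H ^ τ i)⁻¹ = (p : ℝ) / H ^ τ i by rw [div_eq_mul_inv]]
    rw [div_lt_div_iff₀ hpm (hHτ i)]
    have := hm1 i
    rw [pow_succ] at this
    nlinarith [hHτ i]
end

section
/- Let p be a prime, n ≥ 1, x ∈ ℤ_p^n, Ψ = (ψ₁,…,ψₙ) an n-tuple of approximation functions, and N ∈ ℕ. For each 1 ≤ j ≤ n let t_j ∈ ℕ be the unique integer with p^{−t_j} ≤ ψ_j(N) < p^{−t_j + 1}, write x_j = Σ_{i≥0} x_{j,i} p^i with digits x_{j,i} ∈ {0,…,p−1}, and set X_{j,N} = Σ_{i=0}^{t_j} x_{j,i} p^i and ψ*_{j,N} = p^{t_j}. Then the vectors b₀ = (1, X_{1,N},…,X_{n,N}), b₁ = (0, ψ*_{1,N}, 0,…,0), …, bₙ = (0,…,0, ψ*_{n,N}) form a ℤ-basis of the lattice Λ_{N,x}, and consequently ( ∏_{i=1}^n ψ_i(N) )^{−1} ≤ |det Λ_{N,x}| = ∏_{i=1}^n ψ*_{i,N} ≤ p^n ( ∏_{i=1}^n ψ_i(N) )^{−1}. 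-/
open scoped BigOperators

/-!
Because `ψ_j(N)` lies in `[p^{-t_j}, p^{-t_j+1})` and the norms of `p`-adic integers are powers
of `p`, the condition `|a₀ x_j − a_j|_p ≤ ψ_j(N)` says `|a₀ x_j − a_j|_p ≤ p^{-t_j}`; as
`x_j ≡ X_{j,N} mod p^{t_j}`, this is the congruence `p^{t_j} ∣ a_j − a₀ X_{j,N}`. The integer
vectors satisfying these congruences are exactly the integer combinations of the lower-triangular
vectors `b₀, …, bₙ`, whose determinant is the product `∏ p^{t_j}` of the diagonal; the bounds on it
come coordinatewise from the choice of `t_j`.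
-/

/-- The `Ψ`-approximation lattice
`Λ_{N,x} = {(a₀,…,aₙ) ∈ ℤ^{n+1} : |a₀x_i − a_i|_p ≤ ψ_i(N) for all i}`. -/
def Lambda {p : ℕ} [Fact p.Prime] {n : ℕ} (x : Fin n → ℤ_[p])
    (Ψ : Fin n → ℕ → ℝ) (N : ℕ) : Set (Fin (n + 1) → ℤ) :=
  {a | ∀ i : Fin n, ‖(a 0 : ℤ_[p]) * x i - (a i.succ : ℤ_[p])‖ ≤ Ψ i N}

/-- The explicit triangular basis of the `Ψ`-approximation lattice:
`b₀ = (1, X_{1,N}, …, X_{n,N})` and `b_j = ψ*_{j,N} e_j` for `1 ≤ j ≤ n`,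
where `X_{j,N} = Σ_{i=0}^{t_j} x_{j,i} p^i` is the truncation of the `p`-adic digit
expansion of `x_j` (realized by `PadicInt.appr (x j) (t j + 1)`) and
`ψ*_{j,N} = p^{t_j}`. -/
noncomputable def latticeBasis {p : ℕ} [Fact p.Prime] {n : ℕ}
    (x : Fin n → ℤ_[p]) (t : Fin n → ℕ) : Fin (n + 1) → Fin (n + 1) → ℤ :=
  Fin.cons (Fin.cons 1 fun j => ((x j).appr (t j + 1) : ℤ))
    fun i => Pi.single i.succ ((p : ℤ) ^ t i)

namespace PadicInt

variable {p : ℕ} [Fact p.Prime]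

theorem norm_le_iff_norm_le_zpow_of_mem_Ico {r : ℝ} {k : ℤ}
    (hr : r ∈ Set.Ico ((p : ℝ) ^ k) ((p : ℝ) ^ (k + 1))) (z : ℤ_[p]) :
    ‖z‖ ≤ r ↔ ‖z‖ ≤ (p : ℝ) ^ k :=
  ⟨fun h => (norm_le_pow_iff_norm_lt_pow_add_one z k).2 (h.trans_lt hr.2),
    fun h => h.trans hr.1⟩

theorem intCast_mem_span_pow_iff_dvd {a : ℤ} {t : ℕ} :
    (a : ℤ_[p]) ∈ Ideal.span {(p : ℤ_[p]) ^ t} ↔ (p : ℤ) ^ t ∣ a := by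
  rw [← norm_le_pow_iff_mem_span_pow, norm_int_le_pow_iff_dvd]

theorem norm_mul_sub_le_pow_iff_dvd {t k : ℕ} (htk : t ≤ k) (z : ℤ_[p]) (a₀ a : ℤ) :
    ‖(a₀ : ℤ_[p]) * z - a‖ ≤ (p : ℝ) ^ (-t : ℤ) ↔ (p : ℤ) ^ t ∣ a - a₀ * z.appr k := by
  have happr : z - z.appr k ∈ Ideal.span {(p : ℤ_[p]) ^ t} :=
    Ideal.span_singleton_le_span_singleton.2 (pow_dvd_pow _ htk) (appr_spec k z)
  have hsplit :
      (a₀ : ℤ_[p]) * z - a = a₀ * (z - z.appr k) - ((a - a₀ * z.appr k : ℤ) : ℤ_[p]) := by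
    push_cast
    ring
  rw [norm_le_pow_iff_mem_span_pow, hsplit,
    Submodule.sub_mem_iff_right _ (Ideal.mul_mem_left _ _ happr), intCast_mem_span_pow_iff_dvd]

end PadicInt

section TriangularBasis

variable {R : Type*} [CommRing R] {n : ℕ}

def triangularBasis (X d : Fin n → R) : Fin (n + 1) → Fin (n + 1) → R :=
  Fin.cons (Fin.cons 1 X) fun i => Pi.single i.succ (d i)

variable (X d : Fin n → R)

theorem sum_smul_triangularBasis_apply_zero (c : Fin (n + 1) → R) :
    (∑ j, c j • triangularBasis X d j) 0 = c 0 := by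
  simp [triangularBasis, Fin.sum_univ_succ, Fin.succ_ne_zero]

theorem sum_smul_triangularBasis_apply_succ (c : Fin (n + 1) → R) (i : Fin n) :
    (∑ j, c j • triangularBasis X d j) i.succ = c 0 * X i + c i.succ * d i := by
  simp [triangularBasis, Fin.sum_univ_succ, Pi.single_apply]

theorem exists_eq_sum_smul_triangularBasis_iff (v : Fin (n + 1) → R) :
    (∃ c : Fin (n + 1) → R, v = ∑ j, c j • triangularBasis X d j) ↔
      ∀ i, d i ∣ v i.succ - v 0 * X i := by
  constructor
  · rintro ⟨c, rfl⟩ i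
    rw [sum_smul_triangularBasis_apply_zero, sum_smul_triangularBasis_apply_succ]
    exact ⟨c i.succ, by ring⟩
  · intro hdvd
    choose e he using hdvd
    refine ⟨Fin.cons (v 0) e, funext fun k => Fin.cases ?_ (fun i => ?_) k⟩
    · rw [sum_smul_triangularBasis_apply_zero, Fin.cons_zero]
    · rw [sum_smul_triangularBasis_apply_succ, Fin.cons_zero, Fin.cons_succ, mul_comm (e i), ← he]
      ring

theorem sum_smul_triangularBasis_injective (hd : ∀ i, IsRightRegular (d i)) :
    Function.Injective fun c : Fin (n + 1) → R => ∑ j, c j • triangularBasis X d j := by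
  intro c c' h
  have h0 : c 0 = c' 0 := by
    simpa only [sum_smul_triangularBasis_apply_zero] using congrFun h 0
  refine funext fun k => Fin.cases h0 (fun i => ?_) k
  have hi := congrFun h i.succ
  simp only [sum_smul_triangularBasis_apply_succ, h0, add_right_inj] at hi
  exact hd i hi

theorem triangularBasis_mem_span (j : Fin (n + 1)) :
    ∃ c : Fin (n + 1) → R, triangularBasis X d j = ∑ k, c k • triangularBasis X d k :=
  ⟨Pi.single j 1, by simp [Pi.single_apply]⟩

theorem det_triangularBasis : (Matrix.of fun i j => triangularBasis X d j i).det = ∏ i, d i := by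
  rw [Matrix.det_of_isLowerTriangular]
  · simp [Fin.prod_univ_succ, triangularBasis]
  · intro i j hij
    induction j using Fin.cases with
    | zero => exact absurd hij (Fin.not_lt_zero i)
    | succ k =>
      have hik : i < k.succ := hij
      simp [triangularBasis, hik.ne]

end TriangularBasis

section ScaleBounds

variable {b : ℝ}

theorem inv_le_pow_le_mul_inv_of_mem_Ico (hb : 0 < b) {r : ℝ} {t : ℕ}
    (hr : r ∈ Set.Ico (b ^ (-t : ℤ)) (b ^ (-t + 1 : ℤ))) : r⁻¹ ≤ b ^ t ∧ b ^ t ≤ b * r⁻¹ := by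
  obtain ⟨hlo, hhi⟩ := hr
  have hbt : 0 < b ^ t := pow_pos hb t
  have hr0 : 0 < r := (zpow_pos hb _).trans_le hlo
  rw [zpow_neg, zpow_natCast] at hlo
  rw [zpow_add₀ hb.ne', zpow_neg, zpow_natCast, zpow_one, inv_mul_eq_div, lt_div_iff₀ hbt] at hhi
  refine ⟨inv_le_of_inv_le₀ hbt hlo, ?_⟩
  rw [← div_eq_mul_inv, le_div_iff₀ hr0, mul_comm]
  exact hhi.le

theorem inv_prod_le_prod_pow_le (hb : 0 < b) {ι : Type*} [Fintype ι] {r : ι → ℝ} {t : ι → ℕ}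
    (hr : ∀ i, r i ∈ Set.Ico (b ^ (-t i : ℤ)) (b ^ (-t i + 1 : ℤ))) :
    (∏ i, r i)⁻¹ ≤ ∏ i, b ^ t i ∧ ∏ i, b ^ t i ≤ b ^ Fintype.card ι * (∏ i, r i)⁻¹ := by
  have hr0 : ∀ i, 0 < r i := fun i => (zpow_pos hb _).trans_le (hr i).1
  refine ⟨?_, ?_⟩
  · rw [← Finset.prod_inv_distrib]
    exact Finset.prod_le_prod (fun i _ => (inv_pos.2 (hr0 i)).le)
      fun i _ => (inv_le_pow_le_mul_inv_of_mem_Ico hb (hr i)).1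
  · rw [← Finset.prod_inv_distrib, ← Finset.card_univ, ← Finset.prod_const,
      ← Finset.prod_mul_distrib]
    exact Finset.prod_le_prod (fun i _ => (pow_pos hb _).le)
      fun i _ => (inv_le_pow_le_mul_inv_of_mem_Ico hb (hr i)).2

end ScaleBounds

section ApproximationLattice

variable {p : ℕ} [Fact p.Prime] {n : ℕ} (x : Fin n → ℤ_[p]) (t : Fin n → ℕ)

theorem latticeBasis_eq_triangularBasis :
    latticeBasis x t =
      triangularBasis (fun j => ((x j).appr (t j + 1) : ℤ)) fun i => (p : ℤ) ^ t i :=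
  rfl

theorem mem_Lambda_iff_exists_eq_sum_smul_latticeBasis {Ψ : Fin n → ℕ → ℝ} {N : ℕ}
    (ht : ∀ j, Ψ j N ∈ Set.Ico ((p : ℝ) ^ (-t j : ℤ)) ((p : ℝ) ^ (-t j + 1 : ℤ)))
    (v : Fin (n + 1) → ℤ) :
    v ∈ Lambda x Ψ N ↔ ∃ c : Fin (n + 1) → ℤ, v = ∑ j, c j • latticeBasis x t j := by
  rw [latticeBasis_eq_triangularBasis, exists_eq_sum_smul_triangularBasis_iff]
  refine forall_congr' fun i => ?_
  rw [PadicInt.norm_le_iff_norm_le_zpow_of_mem_Ico (ht i),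
    PadicInt.norm_mul_sub_le_pow_iff_dvd (Nat.le_succ _)]

end ApproximationLattice

theorem lattice_basis_and_det_general {p : ℕ} [Fact p.Prime] {n : ℕ}
    (x : Fin n → ℤ_[p]) (Ψ : Fin n → ℕ → ℝ) (N : ℕ)
    (t : Fin n → ℕ)
    (ht : ∀ j, (p : ℝ) ^ (-(t j : ℝ)) ≤ Ψ j N ∧
      Ψ j N < (p : ℝ) ^ (-(t j : ℝ) + 1)) :
    (∀ j, latticeBasis x t j ∈ Lambda x Ψ N) ∧
    (∀ v ∈ Lambda x Ψ N, ∃! c : Fin (n + 1) → ℤ,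
      v = ∑ j, c j • latticeBasis x t j) ∧
    ((Matrix.of fun i j => latticeBasis x t j i).det.natAbs : ℝ)
      = ∏ i, (p : ℝ) ^ t i ∧
    (∏ i, Ψ i N)⁻¹ ≤ ∏ i, (p : ℝ) ^ t i ∧
    ∏ i, (p : ℝ) ^ t i ≤ (p : ℝ) ^ n * (∏ i, Ψ i N)⁻¹ := by
  have hp : 0 < p := (Fact.out : p.Prime).pos
  have hIco : ∀ j, Ψ j N ∈ Set.Ico ((p : ℝ) ^ (-t j : ℤ)) ((p : ℝ) ^ (-t j + 1 : ℤ)) := by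
    intro j
    simpa only [Set.mem_Ico, ← Real.rpow_intCast, Int.cast_add, Int.cast_neg, Int.cast_natCast,
      Int.cast_one] using ht j
  have hmem := mem_Lambda_iff_exists_eq_sum_smul_latticeBasis x t hIco
  have hinj : Function.Injective fun c : Fin (n + 1) → ℤ => ∑ j, c j • latticeBasis x t j :=
    sum_smul_triangularBasis_injective _ _ fun i =>
      (IsRegular.of_ne_zero (pow_ne_zero _ (by exact_mod_cast hp.ne'))).right
  have hbounds := inv_prod_le_prod_pow_le (by exact_mod_cast hp) hIco
  rw [Fintype.card_fin] at hbounds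
  refine ⟨fun j => (hmem _).2 (triangularBasis_mem_span _ _ j), fun v hv => ?_, ?_, hbounds⟩
  · obtain ⟨c, rfl⟩ := (hmem v).1 hv
    exact ⟨c, rfl, fun c' hc' => hinj hc'.symm⟩
  · rw [latticeBasis_eq_triangularBasis, det_triangularBasis, Nat.cast_natAbs]
    push_cast
    exact abs_of_nonneg (by positivity)

/-- The vectors `b₀, …, bₙ` form a `ℤ`-basis of `Λ_{N,x}`, the absolute value of the
determinant of the corresponding basis matrix equals `∏ ψ*_{i,N} = ∏ p^{t_i}`, and
`(∏ ψ_i(N))⁻¹ ≤ ∏ p^{t_i} ≤ pⁿ (∏ ψ_i(N))⁻¹`. -/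
theorem lattice_basis_and_det {p : ℕ} [Fact p.Prime] {n : ℕ}
    (x : Fin n → ℤ_[p]) (Ψ : Fin n → ℕ → ℝ) (hpos : ∀ i q, 0 < Ψ i q)
    (hlim : ∀ i, Filter.Tendsto (Ψ i) Filter.atTop (nhds 0)) (N : ℕ)
    (t : Fin n → ℕ)
    (ht : ∀ j, (p : ℝ) ^ (-(t j : ℝ)) ≤ Ψ j N ∧
      Ψ j N < (p : ℝ) ^ (-(t j : ℝ) + 1)) :
    (∀ j, latticeBasis x t j ∈ Lambda x Ψ N) ∧
    (∀ v ∈ Lambda x Ψ N, ∃! c : Fin (n + 1) → ℤ,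
      v = ∑ j, c j • latticeBasis x t j) ∧
    ((Matrix.of fun i j => latticeBasis x t j i).det.natAbs : ℝ)
      = ∏ i, (p : ℝ) ^ t i ∧
    (∏ i, Ψ i N)⁻¹ ≤ ∏ i, (p : ℝ) ^ t i ∧
    ∏ i, (p : ℝ) ^ t i ≤ (p : ℝ) ^ n * (∏ i, Ψ i N)⁻¹ :=
  lattice_basis_and_det_general x Ψ N t ht
end
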